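/- Let θ be irrational with convergent denominator q, and suppose integers m, m' (each of absolute value a product a₂q₁ as in the setting) satisfy |mθ − n| < 1/(4q) and |m'θ − n'| < 1/(4q) for some integers n, n', with m ≠ m'. Then |m − m'| ≥ q. -/

import Mathlib

/-!
Write `p_j / q_j` for the convergents of `θ` and `e_j = q_j θ - p_j` for their errors. Since
`p_j q_{j+1} - q_j p_{j+1} = ±1`, every integer pair `(k, l)` is `a (q_j, p_j) + b (q_{j+1}, p_{j+1})`
with integers `a, b`, so that `kθ - l = a e_j + b e_{j+1}`. If `0 < |k| < q_{j+1}`, then `a ≠ 0` and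
`ab ≤ 0`; as the errors alternate in sign, the two terms cannot cancel, whence
`|kθ - l| ≥ |e_j| ≥ 1 / (2 q_{j+1})`, the last step because `q_{j+1} e_j - q_j e_{j+1} = ±1` and
`q_j |e_{j+1}| ≤ q_j / q_{j+2} ≤ 1 / 2`. For `k = m - m'` and `l = n - n'` the triangle inequality gives
`|kθ - l| < 1 / (2q)`, so `|m - m'| < q` is impossible.
-/

open GenContFract (of)

theorem exists_eq_mul_add_mul_of_isUnit_det {R : Type*} [CommRing R] {p₀ q₀ p₁ q₁ : R}
    (hdet : IsUnit (p₀ * q₁ - q₀ * p₁)) (k l : R) :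
    ∃ a b : R, k = a * q₀ + b * q₁ ∧ l = a * p₀ + b * p₁ := by
  obtain ⟨u, hu⟩ := hdet
  refine ⟨↑u⁻¹ * (l * q₁ - k * p₁), ↑u⁻¹ * (k * p₀ - l * q₀), ?_, ?_⟩
  · linear_combination (-k) * u.inv_mul + (↑u⁻¹ * k) * hu
  · linear_combination (-l) * u.inv_mul + (↑u⁻¹ * l) * hu

theorem Int.ne_zero_and_mul_nonpos_of_abs_lt {a b q₀ q₁ : ℤ} (hq₀ : 0 ≤ q₀)
    (hk : a * q₀ + b * q₁ ≠ 0) (hlt : |a * q₀ + b * q₁| < q₁) : a ≠ 0 ∧ a * b ≤ 0 := by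
  have hq₁ : 0 < q₁ := (abs_nonneg _).trans_lt hlt
  rw [abs_lt] at hlt
  constructor
  · rintro rfl
    have hb : b ≠ 0 := by rintro rfl; simp at hk
    rcases hb.lt_or_gt with hb | hb <;> nlinarith
  · by_contra! hab
    rcases pos_and_pos_or_neg_and_neg_of_mul_pos hab with ⟨ha, hb⟩ | ⟨ha, hb⟩ <;> nlinarith

theorem abs_le_abs_mul_add_mul {K : Type*} [Field K] [LinearOrder K] [IsStrictOrderedRing K]
    {x y : K} {a b : ℤ} (hxy : x * y ≤ 0) (ha : a ≠ 0) (hab : a * b ≤ 0) :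
    |x| ≤ |a * x + b * y| := by
  have hsame : 0 ≤ (a * x) * (b * y) := by
    have : ((a * b : ℤ) : K) ≤ 0 := by exact_mod_cast hab
    push_cast at this
    nlinarith
  have hadd : |a * x + b * y| = |(a : K) * x| + |(b : K) * y| :=
    (abs_add_eq_add_abs_iff _ _).2 (nonneg_and_nonneg_or_nonpos_and_nonpos_of_mul_nonneg hsame)
  have ha' : (1 : K) ≤ |(a : K)| := by exact_mod_cast Int.one_le_abs ha
  rw [hadd, abs_mul]
  nlinarith [abs_nonneg x, abs_nonneg ((b : K) * y)]

namespace GenContFract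

variable {K : Type*} [Field K] [LinearOrder K] [FloorRing K] {v : K} {n : ℕ}

theorem exists_int_eq_contsAux (v : K) (n : ℕ) : ∃ a b : ℤ, (of v).contsAux n = ⟨a, b⟩ := by
  induction n using Nat.twoStepInduction with
  | zero => exact ⟨1, 0, by simp [zeroth_contAux_eq_one_zero]⟩
  | one => exact ⟨⌊v⌋, 1, by simp [first_contAux_eq_h_one, of_h_eq_floor]⟩
  | more n ih₀ ih₁ =>
    obtain ⟨a₀, b₀, h₀⟩ := ih₀
    obtain ⟨a₁, b₁, h₁⟩ := ih₁
    rcases hs : (of v).s.get? n with _ | gp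
    · exact ⟨a₁, b₁, by rw [contsAux_stable_step_of_terminated hs, h₁]⟩
    · obtain ⟨ha, c, hc⟩ := of_partNum_eq_one_and_exists_int_partDen_eq hs
      refine ⟨c * a₁ + a₀, c * b₁ + b₀, ?_⟩
      rw [contsAux_recurrence hs h₀ h₁, ha, hc]
      push_cast
      ring_nf

theorem exists_int_eq_nums_and_dens (v : K) (n : ℕ) :
    ∃ p q : ℤ, (of v).nums n = p ∧ (of v).dens n = q := by
  obtain ⟨p, q, h⟩ := exists_int_eq_contsAux v (n + 1)
  exact ⟨p, q, by rw [num_eq_conts_a, nth_cont_eq_succ_nth_contAux, h],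
    by rw [den_eq_conts_b, nth_cont_eq_succ_nth_contAux, h]⟩

theorem of_determinant (h : ¬(of v).TerminatedAt n) :
    (of v).nums n * (of v).dens (n + 1) - (of v).dens n * (of v).nums (n + 1) = (-1) ^ (n + 1) :=
  (SimpContFract.of v).determinant h

variable [IsStrictOrderedRing K]

theorem one_le_of_den : 1 ≤ (of v).dens n := by
  induction n with
  | zero => rw [zeroth_den_eq_one]
  | succ n ih => exact ih.trans of_den_mono

theorem of_den_pos : 0 < (of v).dens n :=
  one_pos.trans_le one_le_of_den

theorem of_dens_add_dens_succ_le (h : ¬(of v).TerminatedAt (n + 1)) :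
    (of v).dens n + (of v).dens (n + 1) ≤ (of v).dens (n + 2) := by
  obtain ⟨gp, hs⟩ := Option.ne_none_iff_exists'.1 h
  have hb : 1 ≤ gp.b := of_one_le_get?_partDen (partDen_eq_s_b hs)
  rw [dens_recurrence hs rfl rfl, of_partNum_eq_one (partNum_eq_s_a hs)]
  nlinarith [zero_le_of_den (v := v) (n := n + 1)]

theorem zero_lt_neg_one_pow_mul_sub_convs (h : ¬(of v).TerminatedAt n) :
    0 < (-1) ^ n * (v - (of v).convs n) := by
  obtain ⟨ifp', hs'⟩ := Option.ne_none_iff_exists'.1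
    (mt of_terminatedAt_n_iff_succ_nth_intFractPair_stream_eq_none.2 h)
  obtain ⟨ifp, hs, hfr, -⟩ := IntFractPair.succ_nth_stream_eq_some_iff.1 hs'
  have hB : 0 < ((of v).contsAux (n + 1)).b := by
    rw [← nth_cont_eq_succ_nth_contAux, ← den_eq_conts_b]
    exact of_den_pos
  have hfr_pos : 0 < ifp.fr := (IntFractPair.nth_stream_fr_nonneg hs).lt_of_ne' hfr
  rw [sub_convs_eq hs, if_neg hfr, mul_div_assoc', ← pow_add, ← two_mul, pow_mul, neg_one_sq,
    one_pow]
  have := zero_le_of_contsAux_b (v := v) (n := n)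
  positivity

theorem of_dens_mul_sub_nums_eq (v : K) (n : ℕ) :
    (of v).dens n * v - (of v).nums n = (of v).dens n * (v - (of v).convs n) := by
  have : (of v).dens n ≠ 0 := of_den_pos.ne'
  rw [conv_eq_num_div_den]
  field_simp

theorem of_abs_dens_mul_sub_nums_le (h : ¬(of v).TerminatedAt n) :
    |(of v).dens n * v - (of v).nums n| ≤ 1 / (of v).dens (n + 1) := by
  rw [of_dens_mul_sub_nums_eq, abs_mul, abs_of_pos of_den_pos]
  calc _ ≤ (of v).dens n * (1 / ((of v).dens n * (of v).dens (n + 1))) :=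
        mul_le_mul_of_nonneg_left (abs_sub_convs_le h) of_den_pos.le
    _ = _ := by field_simp [of_den_pos.ne']

theorem of_dens_mul_sub_nums_mul_succ_neg (h : ¬(of v).TerminatedAt (n + 1)) :
    ((of v).dens n * v - (of v).nums n) * ((of v).dens (n + 1) * v - (of v).nums (n + 1)) < 0 := by
  have h₀ := zero_lt_neg_one_pow_mul_sub_convs (terminated_stable n.le_succ |>.mt h)
  have h₁ := zero_lt_neg_one_pow_mul_sub_convs h
  rw [pow_succ] at h₁
  rw [of_dens_mul_sub_nums_eq, of_dens_mul_sub_nums_eq]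
  rcases neg_one_pow_eq_or K n with hs | hs <;> rw [hs] at h₀ h₁ <;>
    nlinarith [mul_pos h₀ h₁, mul_pos (of_den_pos (v := v) (n := n)) (of_den_pos (v := v) (n := n + 1))]

theorem one_div_two_mul_dens_succ_le_abs_dens_mul_sub_nums (h : ¬(of v).TerminatedAt (n + 1)) :
    1 / (2 * (of v).dens (n + 1)) ≤ |(of v).dens n * v - (of v).nums n| := by
  set e₀ := (of v).dens n * v - (of v).nums n
  set e₁ := (of v).dens (n + 1) * v - (of v).nums (n + 1)
  have hd₀ : 0 < (of v).dens n := of_den_pos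
  have hd₁ : 0 < (of v).dens (n + 1) := of_den_pos
  have hunit : |(of v).dens (n + 1) * e₀ - (of v).dens n * e₁| = 1 := by
    have hdet := of_determinant (terminated_stable n.le_succ |>.mt h)
    rw [show (of v).dens (n + 1) * e₀ - (of v).dens n * e₁ = -(-1) ^ (n + 1) by
      rw [← hdet]; ring]
    simp
  have he₁ : (of v).dens n * |e₁| ≤ 1 / 2 := by
    have hd₂ := of_dens_add_dens_succ_le h
    have := of_abs_dens_mul_sub_nums_le h
    calc (of v).dens n * |e₁| ≤ (of v).dens n * (1 / (of v).dens (n + 2)) := by gcongr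
      _ ≤ 1 / 2 := by
        rw [mul_one_div, div_le_div_iff₀ (by linarith) two_pos]
        linarith [of_den_mono (v := v) (n := n)]
  have htri := abs_sub ((of v).dens (n + 1) * e₀) ((of v).dens n * e₁)
  rw [hunit, abs_mul, abs_mul, abs_of_pos hd₀, abs_of_pos hd₁] at htri
  rw [div_le_iff₀ (by positivity)]
  linarith

theorem abs_dens_mul_sub_nums_le_abs_mul_sub (h : ¬(of v).TerminatedAt (n + 1)) {k l : ℤ}
    (hk : k ≠ 0) (hkq : |(k : K)| < (of v).dens (n + 1)) :
    |(of v).dens n * v - (of v).nums n| ≤ |k * v - l| := by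
  obtain ⟨p₀, q₀, hp₀, hq₀⟩ := exists_int_eq_nums_and_dens v n
  obtain ⟨p₁, q₁, hp₁, hq₁⟩ := exists_int_eq_nums_and_dens v (n + 1)
  have hdet : p₀ * q₁ - q₀ * p₁ = (-1) ^ (n + 1) := by
    have := of_determinant (terminated_stable n.le_succ |>.mt h)
    rw [hp₀, hq₀, hp₁, hq₁] at this
    exact_mod_cast this
  obtain ⟨a, b, rfl, rfl⟩ := exists_eq_mul_add_mul_of_isUnit_det
    (hdet ▸ (isUnit_neg_one (α := ℤ)).pow (n + 1)) k l
  have hq₀_nonneg : 0 ≤ q₀ := by exact_mod_cast hq₀ ▸ zero_le_of_den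
  obtain ⟨ha, hab⟩ := Int.ne_zero_and_mul_nonpos_of_abs_lt hq₀_nonneg hk
    (by rw [hq₁] at hkq; exact_mod_cast hkq)
  have herr := of_dens_mul_sub_nums_mul_succ_neg h
  rw [hp₀, hq₀, hp₁, hq₁] at herr
  rw [hp₀, hq₀]
  convert abs_le_abs_mul_add_mul herr.le ha hab using 2
  push_cast
  ring

theorem one_div_two_mul_dens_le_abs_mul_sub (h : ¬(of v).TerminatedAt n) {k l : ℤ} (hk : k ≠ 0)
    (hkq : |(k : K)| < (of v).dens n) : 1 / (2 * (of v).dens n) ≤ |k * v - l| := by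
  cases n with
  | zero =>
    rw [zeroth_den_eq_one] at hkq
    exact absurd hkq (not_lt.2 (by exact_mod_cast Int.one_le_abs hk))
  | succ n =>
    exact (one_div_two_mul_dens_succ_le_abs_dens_mul_sub_nums h).trans
      (abs_dens_mul_sub_nums_le_abs_mul_sub h hk hkq)

theorem not_terminatedAt_of_irrational {θ : ℝ} (hθ : Irrational θ) (n : ℕ) :
    ¬(of θ).TerminatedAt n := fun hn ↦ by
  obtain ⟨r, hr⟩ := (terminates_iff_rat θ).1 ⟨n, hn⟩
  exact hθ ⟨r, hr.symm⟩

end GenContFract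

theorem stmt_13_general (θ : ℝ) (hθ : Irrational θ) (q : ℤ)
    (hconv : ∃ n : ℕ, (GenContFract.of θ).dens n = (q : ℝ))
    (m m' n n' : ℤ)
    (h1 : |(m : ℝ) * θ - (n : ℝ)| < 1 / (4 * (q : ℝ)))
    (h2 : |(m' : ℝ) * θ - (n' : ℝ)| < 1 / (4 * (q : ℝ)))
    (hmm : m ≠ m') :
    q ≤ |m - m'| := by
  obtain ⟨N, hN⟩ := hconv
  by_contra! hlt
  have hq : (0 : ℝ) < q := hN ▸ GenContFract.of_den_pos
  have hbound := GenContFract.one_div_two_mul_dens_le_abs_mul_sub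
    (GenContFract.not_terminatedAt_of_irrational hθ N) (sub_ne_zero.2 hmm) (l := n - n')
    (by rw [hN]; exact_mod_cast hlt)
  rw [hN] at hbound
  have htri : |((m - m' : ℤ) : ℝ) * θ - ((n - n' : ℤ) : ℝ)| ≤
      |(m : ℝ) * θ - n| + |(m' : ℝ) * θ - n'| := by
    rw [show ((m - m' : ℤ) : ℝ) * θ - ((n - n' : ℤ) : ℝ) = (m * θ - n) - (m' * θ - n') by
      push_cast; ring]
    exact abs_sub _ _
  have hhalf : 1 / (4 * (q : ℝ)) + 1 / (4 * q) = 1 / (2 * q) := by field_simp; ring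
  linarith

theorem stmt_13 (θ : ℝ) (hθ : Irrational θ) (q : ℤ) (hq : 1 ≤ q)
    (hconv : ∃ n : ℕ, (GenContFract.of θ).dens n = (q : ℝ))
    (m m' n n' : ℤ)
    (h1 : |(m : ℝ) * θ - (n : ℝ)| < 1 / (4 * (q : ℝ)))
    (h2 : |(m' : ℝ) * θ - (n' : ℝ)| < 1 / (4 * (q : ℝ)))
    (hmm : m ≠ m') :
    q ≤ |m - m'| :=
  stmt_13_general θ hθ q hconv m m' n n' h1 h2 hmm
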